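/- arXiv:2511.22932 — 3 statements merged into one kernel-verified Lean document; each statement's English description precedes it below -/
import Mathlib

section
/- Define G(c,λ) = c·λ − g_α(λ). Then there exists λ* > 0 such that G(c*(α), λ*) = 0, and: (i) if c > c*(α), there exist λ₁, λ₂ with 0 < λ₁ < λ* < λ₂ such that G(c,λ₁) = G(c,λ₂) = 0 and G(c,λ*) > 0; (ii) if c = c*(α), then λ* is the unique positive zero of λ ↦ G(c,λ); (iii) if c < c*(α), then G(c,λ) < 0 for every λ > 0. -/
open Real Set Filter

noncomputable def delta1 (α : ℝ) : ℝ := Real.cos α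
noncomputable def delta2 (α : ℝ) : ℝ := (1/2) * Real.cos α + (Real.sqrt 3 / 2) * Real.sin α
noncomputable def delta3 (α : ℝ) : ℝ := (1/2) * Real.cos α - (Real.sqrt 3 / 2) * Real.sin α

/-- The function g_α(λ) from the minimal wave speed formula, with `a` playing the role of f'(0). -/
noncomputable def gfun (a α l : ℝ) : ℝ :=
  (1/6) * ((Real.exp (l * delta1 α) + Real.exp (-(l * delta1 α)))
    + (Real.exp (l * delta2 α) + Real.exp (-(l * delta2 α)))
    + (Real.exp (l * delta3 α) + Real.exp (-(l * delta3 α)))) - 1 + a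

/-- The minimal wave speed c*(α) = inf_{λ>0} g_α(λ)/λ. -/
noncomputable def cstar (a α : ℝ) : ℝ := sInf {c : ℝ | ∃ l : ℝ, 0 < l ∧ c = gfun a α l / l}

/-!
The function `g = g_α` is continuous, strictly convex, satisfies `g 0 = a > 0` and grows at least
quadratically, since `Σ δₘ² = 3/2`. Hence `g λ / λ` tends to `+∞` both at `0⁺` and at `+∞`, so it
attains its infimum `c*` at some `λ* > 0`, where the line `c* λ` touches the graph of `g`.
For `c > c*` the line `c λ` lies above `g` at `λ*` and below it at `0` and at `+∞`, which gives the
two zeros; strict convexity makes the touching point unique.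
-/

open Topology

lemma one_add_sq_div_two_le_cosh (x : ℝ) : 1 + x ^ 2 / 2 ≤ cosh x := by
  have h := sum_le_hasSum (Finset.range 2)
    (fun n _ => div_nonneg ((even_two_mul n).pow_nonneg x) (Nat.cast_nonneg _)) (hasSum_cosh x)
  simpa [Finset.sum_range_succ] using h

lemma hasDerivAt_cosh_mul (δ l : ℝ) : HasDerivAt (fun l => cosh (l * δ)) (δ * sinh (l * δ)) l := by
  simpa [mul_comm] using ((hasDerivAt_id l).mul_const δ).cosh

lemma hasDerivAt_sinh_mul (δ l : ℝ) : HasDerivAt (fun l => sinh (l * δ)) (δ * cosh (l * δ)) l := by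
  simpa [mul_comm] using ((hasDerivAt_id l).mul_const δ).sinh

noncomputable def minSpeed (g : ℝ → ℝ) : ℝ := sInf {c : ℝ | ∃ l : ℝ, 0 < l ∧ c = g l / l}

section MinSpeed

variable {g : ℝ → ℝ}

lemma tendsto_div_self_nhdsGT_zero (hg : ContinuousWithinAt g (Ioi 0) 0) (h0 : 0 < g 0) :
    Tendsto (fun l => g l / l) (𝓝[>] 0) atTop := by
  simp_rw [div_eq_mul_inv]
  exact Tendsto.pos_mul_atTop h0 hg tendsto_inv_nhdsGT_zero

lemma exists_isMinOn_div_self (hg : ContinuousOn g (Ici 0)) (h0 : 0 < g 0)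
    (hgrowth : Tendsto (fun l => g l / l) atTop atTop) :
    ∃ ls ∈ Ioi 0, IsMinOn (fun l => g l / l) (Ioi 0) ls := by
  set h := fun l => g l / l
  have hg0 : ContinuousWithinAt g (Ioi 0) 0 :=
    (hg.continuousWithinAt self_mem_Ici).mono Ioi_subset_Ici_self
  obtain ⟨ε, hε, hsmall⟩ := (nhdsGT_basis (0 : ℝ)).eventually_iff.1
    ((tendsto_div_self_nhdsGT_zero hg0 h0).eventually_gt_atTop (h 1))
  obtain ⟨R, hlarge⟩ := eventually_atTop.1 (hgrowth.eventually_gt_atTop (h 1))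
  set K := Icc (min ε 1) (max R 1)
  have hK : K ⊆ Ioi 0 := fun l hl => (lt_min hε one_pos).trans_le hl.1
  have h1K : (1 : ℝ) ∈ K := ⟨min_le_right _ _, le_max_right _ _⟩
  obtain ⟨ls, hlsK, hmin⟩ := isCompact_Icc.exists_isMinOn ⟨1, h1K⟩
    ((hg.mono (hK.trans Ioi_subset_Ici_self)).div continuousOn_id fun l hl => (hK hl).ne')
  refine ⟨ls, hK hlsK, isMinOn_iff.2 fun l (hl : 0 < l) => ?_⟩
  by_cases hlK : l ∈ K
  · exact hmin hlK
  · have h1l : h 1 < h l := by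
      rcases not_and_or.1 hlK with hlo | hhi
      · exact hsmall ⟨hl, (lt_of_not_ge hlo).trans_le (min_le_left _ _)⟩
      · exact hlarge l ((le_max_left _ _).trans (lt_of_not_ge hhi).le)
    exact (hmin h1K).trans h1l.le

lemma minSpeed_eq_of_isMinOn {ls : ℝ} (hls : 0 < ls)
    (hmin : IsMinOn (fun l => g l / l) (Ioi 0) ls) : minSpeed g = g ls / ls :=
  IsLeast.csInf_eq ⟨⟨ls, hls, rfl⟩, by rintro _ ⟨l, hl, rfl⟩; exact hmin hl⟩

lemma exists_zeros_around_of_lt_mul (hg : ContinuousOn g (Ici 0)) (h0 : 0 < g 0)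
    (hgrowth : Tendsto (fun l => g l / l) atTop atTop) {c ls : ℝ} (hls : 0 < ls)
    (hlt : g ls < c * ls) :
    ∃ l1 l2 : ℝ, 0 < l1 ∧ l1 < ls ∧ ls < l2 ∧ c * l1 - g l1 = 0 ∧ c * l2 - g l2 = 0 := by
  have hG : ContinuousOn (fun l => c * l - g l) (Ici 0) :=
    (continuousOn_const.mul continuousOn_id).sub hg
  obtain ⟨l1, ⟨hl1, hl1s⟩, hG1⟩ := intermediate_value_Ioo hls.le (hG.mono Icc_subset_Ici_self)
    (show (0 : ℝ) ∈ Ioo (c * 0 - g 0) (c * ls - g ls) by constructor <;> simp <;> linarith)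
  obtain ⟨R, hR⟩ := eventually_atTop.1 (hgrowth.eventually_gt_atTop c)
  set L := max R (ls + 1)
  have hlsL : ls < L := (lt_add_one ls).trans_le (le_max_right _ _)
  have hL : c * L < g L := (lt_div_iff₀ (hls.trans hlsL)).1 (hR L (le_max_left _ _))
  obtain ⟨l2, ⟨hl2, -⟩, hG2⟩ :=
    intermediate_value_Ioo' hlsL.le (hG.mono (Icc_subset_Ici_iff hlsL.le |>.2 hls.le))
      (show (0 : ℝ) ∈ Ioo (c * L - g L) (c * ls - g ls) by constructor <;> linarith)
  exact ⟨l1, l2, hl1, hl1s, hl2, hG1, hG2⟩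

lemma StrictConvexOn.eq_of_mul_eq_of_forall_mul_le (hconv : StrictConvexOn ℝ (Ioi 0) g)
    {c x y : ℝ} (hle : ∀ l, 0 < l → c * l ≤ g l) (hx : 0 < x) (hy : 0 < y) (hgx : c * x = g x)
    (hgy : c * y = g y) : x = y := by
  have hconv' : StrictConvexOn ℝ (Ioi 0) (fun l => g l - c * l) :=
    hconv.sub_concaveOn ((LinearMap.mul ℝ ℝ c).concaveOn (convex_Ioi 0))
  have hmin : ∀ z, c * z = g z → IsMinOn (fun l => g l - c * l) (Ioi 0) z := fun z hz =>
    isMinOn_iff.2 fun l hl => by linarith [hle l hl]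
  exact hconv'.eq_of_isMinOn (hmin x hgx) (hmin y hgy) hx hy

end MinSpeed

section Gfun

variable (a α : ℝ)

lemma delta_sq_sum : delta1 α ^ 2 + delta2 α ^ 2 + delta3 α ^ 2 = 3 / 2 := by
  have h3 : √3 ^ 2 = 3 := sq_sqrt (by norm_num)
  simp only [delta1, delta2, delta3]
  linear_combination (1 / 2) * h3 * (sin α ^ 2) + (3 / 2) * sin_sq_add_cos_sq α

lemma cstar_eq_minSpeed : cstar a α = minSpeed (gfun a α) := rfl

lemma gfun_eq_cosh (l : ℝ) :
    gfun a α l = (cosh (l * delta1 α) + cosh (l * delta2 α) + cosh (l * delta3 α)) / 3 - 1 + a := by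
  simp only [gfun, cosh_eq]
  ring

lemma gfun_zero : gfun a α 0 = a := by
  norm_num [gfun_eq_cosh]

lemma continuous_gfun : Continuous (gfun a α) := by
  unfold gfun
  fun_prop

lemma add_sq_div_four_le_gfun (l : ℝ) : a + l ^ 2 / 4 ≤ gfun a α l := by
  have hsq : (l * delta1 α) ^ 2 + (l * delta2 α) ^ 2 + (l * delta3 α) ^ 2 = 3 / 2 * l ^ 2 := by
    rw [mul_pow, mul_pow, mul_pow, ← delta_sq_sum α]
    ring
  rw [gfun_eq_cosh]
  linarith [one_add_sq_div_two_le_cosh (l * delta1 α), one_add_sq_div_two_le_cosh (l * delta2 α),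
    one_add_sq_div_two_le_cosh (l * delta3 α)]

lemma tendsto_gfun_div_self_atTop : Tendsto (fun l => gfun a α l / l) atTop atTop := by
  have hlower : Tendsto (fun l => a / l + l / 4) atTop atTop :=
    ((tendsto_const_nhds (x := a)).div_atTop tendsto_id).add_atTop
      (tendsto_id.atTop_div_const four_pos)
  refine tendsto_atTop_mono' atTop ?_ hlower
  filter_upwards [eventually_gt_atTop 0] with l hl
  calc a / l + l / 4 = (a + l ^ 2 / 4) / l := by field_simp
    _ ≤ gfun a α l / l := by gcongr; exact add_sq_div_four_le_gfun a α l

lemma hasDerivAt_gfun (l : ℝ) : HasDerivAt (gfun a α)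
    ((delta1 α * sinh (l * delta1 α) + delta2 α * sinh (l * delta2 α)
      + delta3 α * sinh (l * delta3 α)) / 3) l := by
  rw [show gfun a α = _ from funext (gfun_eq_cosh a α)]
  exact ((((hasDerivAt_cosh_mul _ l).add (hasDerivAt_cosh_mul _ l)).add
    (hasDerivAt_cosh_mul _ l)).div_const 3).sub_const 1 |>.add_const a

lemma deriv2_gfun (l : ℝ) : deriv^[2] (gfun a α) l =
    (delta1 α ^ 2 * cosh (l * delta1 α) + delta2 α ^ 2 * cosh (l * delta2 α)
      + delta3 α ^ 2 * cosh (l * delta3 α)) / 3 := by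
  have hd : deriv (gfun a α) = fun l => (delta1 α * sinh (l * delta1 α)
      + delta2 α * sinh (l * delta2 α) + delta3 α * sinh (l * delta3 α)) / 3 :=
    funext fun l => (hasDerivAt_gfun a α l).deriv
  have hd2 : HasDerivAt (fun l => (delta1 α * sinh (l * delta1 α)
      + delta2 α * sinh (l * delta2 α) + delta3 α * sinh (l * delta3 α)) / 3)
      ((delta1 α * (delta1 α * cosh (l * delta1 α)) + delta2 α * (delta2 α * cosh (l * delta2 α))
        + delta3 α * (delta3 α * cosh (l * delta3 α))) / 3) l :=
    ((((hasDerivAt_sinh_mul _ l).const_mul _).add ((hasDerivAt_sinh_mul _ l).const_mul _)).add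
      ((hasDerivAt_sinh_mul _ l).const_mul _)).div_const 3
  rw [Function.iterate_succ_apply, Function.iterate_one, hd, hd2.deriv]
  ring

lemma strictConvexOn_gfun : StrictConvexOn ℝ univ (gfun a α) := by
  refine strictConvexOn_univ_of_deriv2_pos (continuous_gfun a α) fun l => ?_
  have hcosh (δ : ℝ) : δ ^ 2 ≤ δ ^ 2 * cosh (l * δ) :=
    le_mul_of_one_le_right (sq_nonneg δ) (one_le_cosh _)
  rw [deriv2_gfun]
  linarith [delta_sq_sum α, hcosh (delta1 α), hcosh (delta2 α), hcosh (delta3 α)]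

end Gfun

theorem stmt1 (a : ℝ) (ha : 0 < a) (α : ℝ) :
    ∃ lstar : ℝ, 0 < lstar ∧ cstar a α * lstar - gfun a α lstar = 0 ∧
      (∀ c : ℝ, cstar a α < c →
        ∃ l1 l2 : ℝ, 0 < l1 ∧ l1 < lstar ∧ lstar < l2 ∧
          c * l1 - gfun a α l1 = 0 ∧ c * l2 - gfun a α l2 = 0 ∧
          0 < c * lstar - gfun a α lstar) ∧
      (∀ l : ℝ, 0 < l → cstar a α * l - gfun a α l = 0 → l = lstar) ∧
      (∀ c : ℝ, c < cstar a α → ∀ l : ℝ, 0 < l → c * l - gfun a α l < 0) := by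
  have hcont := (continuous_gfun a α).continuousOn (s := Ici 0)
  have h0 : 0 < gfun a α 0 := (gfun_zero a α).symm ▸ ha
  obtain ⟨ls, hls, hmin⟩ := exists_isMinOn_div_self hcont h0 (tendsto_gfun_div_self_atTop a α)
  have hc : cstar a α = gfun a α ls / ls :=
    (cstar_eq_minSpeed a α).trans (minSpeed_eq_of_isMinOn hls hmin)
  have hle : ∀ l, 0 < l → cstar a α * l ≤ gfun a α l := fun l hl => by
    rw [← le_div_iff₀ hl, hc]
    exact hmin hl
  have htouch : cstar a α * ls = gfun a α ls := by rw [hc, div_mul_cancel₀ _ hls.ne']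
  refine ⟨ls, hls, sub_eq_zero.2 htouch, fun c hc' => ?_, fun l hl hzero => ?_,
    fun c hc' l hl => ?_⟩
  · have hlt : gfun a α ls < c * ls := htouch ▸ mul_lt_mul_of_pos_right hc' hls
    obtain ⟨l1, l2, h⟩ := exists_zeros_around_of_lt_mul hcont h0
      (tendsto_gfun_div_self_atTop a α) hls hlt
    exact ⟨l1, l2, h.1, h.2.1, h.2.2.1, h.2.2.2.1, h.2.2.2.2, sub_pos.2 hlt⟩
  · exact ((strictConvexOn_gfun a α).subset (subset_univ _) (convex_Ioi 0))
      |>.eq_of_mul_eq_of_forall_mul_le hle hl hls (sub_eq_zero.1 hzero) htouch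
  · linarith [hle l hl, mul_lt_mul_of_pos_right hc' hl]
end

section
/- Assume c > c*(α) and hypothesis (H), let λ₁ < λ₂ be the two positive roots of c·λ = g(λ), let γ satisfy 0 < γ < min{λ₁·θ, λ₂ − λ₁}, and let M ≥ max{1, N / G(c, λ₁+γ)}. Then the function U̲(ξ) := max{0, (1 − M·exp(γ·ξ))·exp(λ₁·ξ)} satisfies 0 ≤ U̲(ξ) ≤ min{1, exp(λ₁·ξ)} for all ξ, and the lower-solution differential inequality c·U̲′(ξ) ≤ (1/6)·𝒟_h[U̲](ξ) + f(U̲(ξ)) for every ξ ∈ ℝ with ξ ≠ −(ln M)/γ. -/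
/-! Left of `ξ₀ = -log M / γ ≤ 0` the profile equals `ψ = e^{λ₁ξ} - M e^{(λ₁+γ)ξ}`, right of it
it vanishes. Exponentials are eigenfunctions of the lattice operator,
`(1/6) 𝒟_h e^{λ·} = (g(λ) - f'(0)) e^{λ·}`, so because `cλ₁ = g(λ₁)` the linear defect of `ψ` is
`-M G(c, λ₁+γ) e^{(λ₁+γ)ξ}`. This term has the right sign since `g` is strictly convex and the
line `cλ` meets its graph at `λ₁ < λ₁ + γ < λ₂`, and it absorbs the nonlinear loss of (H) because
`N ≤ M G(c, λ₁+γ)` and, for `ξ ≤ 0` and `γ ≤ λ₁θ`, `U^{1+θ} ≤ e^{(1+θ)λ₁ξ} ≤ e^{(λ₁+γ)ξ}`.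
Since `U ≥ ψ` with equality at `ξ`, `𝒟_h U(ξ) ≥ 𝒟_h ψ(ξ)`; right of `ξ₀`, `U` vanishes near `ξ`
and `𝒟_h U(ξ) ≥ 0`.
-/

open Real Set Filter

/-- The discrete diffusion operator on the hexagonal lattice, in direction α. -/
noncomputable def Dh (α : ℝ) (U : ℝ → ℝ) (ξ : ℝ) : ℝ :=
  (U (ξ + delta1 α) + U (ξ - delta1 α)) + (U (ξ + delta2 α) + U (ξ - delta2 α))
    + (U (ξ + delta3 α) + U (ξ - delta3 α)) - 6 * U ξ

/-- Fisher-KPP conditions: f is C¹ on [0,1] with derivative f', f(0)=f(1)=0, f'(0)>0,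
and 0 < f(s) ≤ f'(0)·s on (0,1). -/
def FisherKPP (f f' : ℝ → ℝ) : Prop :=
  (∀ s ∈ Set.Icc (0:ℝ) 1, HasDerivAt f (f' s) s) ∧
  ContinuousOn f' (Set.Icc (0:ℝ) 1) ∧
  f 0 = 0 ∧ f 1 = 0 ∧ 0 < f' 0 ∧
  (∀ s ∈ Set.Ioo (0:ℝ) 1, 0 < f s ∧ f s ≤ f' 0 * s)

/-- A traveling wave with speed c: a C¹ function U : ℝ → [0,1] solving
c·U′ = (1/6)·𝒟_h[U] + f(U) with limits 0 at −∞ and 1 at +∞. -/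
def IsTravelingWave (α : ℝ) (f : ℝ → ℝ) (c : ℝ) (U : ℝ → ℝ) : Prop :=
  ContDiff ℝ 1 U ∧ (∀ ξ, U ξ ∈ Set.Icc (0:ℝ) 1) ∧
  (∀ ξ, c * deriv U ξ = (1/6) * Dh α U ξ + f (U ξ)) ∧
  Filter.Tendsto U Filter.atBot (nhds 0) ∧ Filter.Tendsto U Filter.atTop (nhds 1)

lemma strictConvexOn_exp_mul {δ : ℝ} (hδ : δ ≠ 0) : StrictConvexOn ℝ univ fun l => exp (l * δ) := by
  refine ⟨convex_univ, fun x _ y _ hxy s t hs ht hst => ?_⟩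
  have hne : x * δ ≠ y * δ := (mul_left_injective₀ hδ).ne hxy
  simpa only [smul_eq_mul, add_mul, mul_assoc] using
    strictConvexOn_exp.2 (mem_univ _) (mem_univ _) hne hs ht hst

lemma convexOn_exp_mul (δ : ℝ) : ConvexOn ℝ univ fun l => exp (l * δ) := by
  rcases eq_or_ne δ 0 with rfl | hδ
  · simpa using convexOn_const (1 : ℝ) convex_univ
  · exact (strictConvexOn_exp_mul hδ).convexOn

lemma convexOn_exp_add_exp_neg (δ : ℝ) :
    ConvexOn ℝ univ fun l => exp (l * δ) + exp (-(l * δ)) := by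
  have h := (convexOn_exp_mul δ).add (convexOn_exp_mul (-δ))
  simp only [mul_neg] at h
  exact h

lemma strictConvexOn_exp_add_exp_neg {δ : ℝ} (hδ : δ ≠ 0) :
    StrictConvexOn ℝ univ fun l => exp (l * δ) + exp (-(l * δ)) := by
  have h := (strictConvexOn_exp_mul hδ).add_convexOn (convexOn_exp_mul (-δ))
  simp only [mul_neg] at h
  exact h

lemma delta_ne_zero (α : ℝ) : delta1 α ≠ 0 ∨ delta2 α ≠ 0 ∨ delta3 α ≠ 0 := by
  by_contra! h
  obtain ⟨h1, h2, h3⟩ := h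
  simp only [delta1, delta2, delta3] at h1 h2 h3
  have hsin : sqrt 3 * sin α = 0 := by linarith
  have := sin_sq_add_cos_sq α
  simp_all

lemma gfun_strictConvexOn (a α : ℝ) : StrictConvexOn ℝ univ (gfun a α) := by
  have hsum : StrictConvexOn ℝ univ fun l =>
      (exp (l * delta1 α) + exp (-(l * delta1 α))) + (exp (l * delta2 α) + exp (-(l * delta2 α)))
        + (exp (l * delta3 α) + exp (-(l * delta3 α))) := by
    rcases delta_ne_zero α with h | h | h
    · exact ((strictConvexOn_exp_add_exp_neg h).add_convexOn (convexOn_exp_add_exp_neg _)).add_convexOn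
        (convexOn_exp_add_exp_neg _)
    · exact ((convexOn_exp_add_exp_neg _).add_strictConvexOn (strictConvexOn_exp_add_exp_neg h)).add_convexOn
        (convexOn_exp_add_exp_neg _)
    · exact ((convexOn_exp_add_exp_neg _).add (convexOn_exp_add_exp_neg _)).add_strictConvexOn
        (strictConvexOn_exp_add_exp_neg h)
  refine ⟨convex_univ, fun x _ y _ hxy s t hs ht hst => ?_⟩
  have := hsum.2 (mem_univ x) (mem_univ y) hxy hs ht hst
  simp only [gfun, smul_eq_mul] at this ⊢
  linear_combination (1 / 6 : ℝ) * this + (1 - a) * hst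

lemma StrictConvexOn.lt_of_mem_Ioo_of_eq_mul {φ : ℝ → ℝ} (hφ : StrictConvexOn ℝ univ φ)
    {c x y z : ℝ} (hx : φ x = c * x) (hy : φ y = c * y) (hz : z ∈ Ioo x y) : φ z < c * z := by
  have hψ : StrictConvexOn ℝ univ fun w => φ w - c * w :=
    hφ.sub_concaveOn ((LinearMap.mul ℝ ℝ c).concaveOn convex_univ)
  have := hψ.lt_on_openSegment (mem_univ x) (mem_univ y) (hz.1.trans hz.2).ne
    (by rwa [openSegment_eq_Ioo (hz.1.trans hz.2)])
  simp only [hx, hy, sub_self, max_self] at this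
  linarith

section DiscreteDiffusion

variable (α : ℝ)

lemma Dh_sub_const_mul (U V : ℝ → ℝ) (M ξ : ℝ) :
    Dh α (fun ζ => U ζ - M * V ζ) ξ = Dh α U ξ - M * Dh α V ξ := by
  simp only [Dh]
  ring

lemma Dh_exp_mul (a l ξ : ℝ) :
    (1 / 6) * Dh α (fun ζ => exp (l * ζ)) ξ = (gfun a α l - a) * exp (l * ξ) := by
  simp only [Dh, gfun, mul_add, mul_sub, exp_add, exp_sub, exp_neg]
  ring

lemma Dh_le_Dh_of_le_of_eq {U V : ℝ → ℝ} {ξ : ℝ} (hle : ∀ ζ, V ζ ≤ U ζ) (heq : V ξ = U ξ) :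
    Dh α V ξ ≤ Dh α U ξ := by
  simp only [Dh]
  linarith [hle (ξ + delta1 α), hle (ξ - delta1 α), hle (ξ + delta2 α), hle (ξ - delta2 α),
    hle (ξ + delta3 α), hle (ξ - delta3 α)]

lemma Dh_nonneg_of_nonneg_of_eq_zero {U : ℝ → ℝ} {ξ : ℝ} (hU : ∀ ζ, 0 ≤ U ζ) (hξ : U ξ = 0) :
    0 ≤ Dh α U ξ := by
  simpa [Dh] using Dh_le_Dh_of_le_of_eq α (V := fun _ => 0) hU hξ.symm

end DiscreteDiffusion

section LowerSolution

noncomputable def lowerSolution (M γ l ξ : ℝ) : ℝ := max 0 ((1 - M * exp (γ * ξ)) * exp (l * ξ))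

variable {M γ l ξ : ℝ}

lemma one_sub_mul_exp_mul_exp :
    (1 - M * exp (γ * ξ)) * exp (l * ξ) = exp (l * ξ) - M * exp ((l + γ) * ξ) := by
  rw [add_mul, exp_add]
  ring

lemma mul_exp_lt_one_iff (hM : 0 < M) (hγ : 0 < γ) : M * exp (γ * ξ) < 1 ↔ ξ < -log M / γ := by
  rw [show M * exp (γ * ξ) = exp (log M + γ * ξ) by rw [exp_add, exp_log hM], exp_lt_one_iff,
    lt_div_iff₀ hγ]
  constructor <;> intro h <;> linarith

lemma lowerSolution_nonneg : 0 ≤ lowerSolution M γ l ξ := le_max_left _ _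

lemma lowerSolution_le_exp (hM : 0 ≤ M) : lowerSolution M γ l ξ ≤ exp (l * ξ) := by
  rw [lowerSolution, one_sub_mul_exp_mul_exp]
  exact max_le (exp_pos _).le (sub_le_self _ (by positivity))

lemma lowerSolution_eq_of_lt (hM : 0 < M) (hγ : 0 < γ) (hξ : ξ < -log M / γ) :
    lowerSolution M γ l ξ = exp (l * ξ) - M * exp ((l + γ) * ξ) := by
  have h := (mul_exp_lt_one_iff hM hγ).2 hξ
  rw [lowerSolution, max_eq_right (mul_nonneg (by linarith) (exp_pos _).le),
    one_sub_mul_exp_mul_exp]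

lemma lowerSolution_eq_zero_of_le (hM : 0 < M) (hγ : 0 < γ) (hξ : -log M / γ ≤ ξ) :
    lowerSolution M γ l ξ = 0 := by
  have h := not_lt.1 ((mul_exp_lt_one_iff hM hγ).not.2 hξ.not_gt)
  exact max_eq_left (mul_nonpos_of_nonpos_of_nonneg (by linarith) (exp_pos _).le)

lemma threshold_nonpos (hM : 1 ≤ M) (hγ : 0 < γ) : -log M / γ ≤ 0 :=
  div_nonpos_of_nonpos_of_nonneg (neg_nonpos.2 (log_nonneg hM)) hγ.le

lemma lowerSolution_le_one (hM : 1 ≤ M) (hγ : 0 < γ) (hl : 0 ≤ l) : lowerSolution M γ l ξ ≤ 1 := by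
  rcases lt_or_ge ξ (-log M / γ) with hξ | hξ
  · have hξ0 : ξ ≤ 0 := (hξ.trans_le (threshold_nonpos hM hγ)).le
    exact (lowerSolution_le_exp (by linarith)).trans
      (exp_le_one_iff.2 (mul_nonpos_of_nonneg_of_nonpos hl hξ0))
  · rw [lowerSolution_eq_zero_of_le (by linarith) hγ hξ]
    exact zero_le_one

lemma hasDerivAt_lowerSolution_of_lt (hM : 0 < M) (hγ : 0 < γ) (hξ : ξ < -log M / γ) :
    HasDerivAt (lowerSolution M γ l)
      (exp (l * ξ) * l - M * (exp ((l + γ) * ξ) * (l + γ))) ξ := by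
  have h1 := ((hasDerivAt_id ξ).const_mul l).exp
  have h2 := (((hasDerivAt_id ξ).const_mul (l + γ)).exp).const_mul M
  simp only [id, mul_one] at h1 h2
  exact (h1.sub h2).congr_of_eventuallyEq (eventually_of_mem (Iio_mem_nhds hξ)
    fun ζ hζ => lowerSolution_eq_of_lt hM hγ hζ)

lemma hasDerivAt_lowerSolution_of_gt (hM : 0 < M) (hγ : 0 < γ) (hξ : -log M / γ < ξ) :
    HasDerivAt (lowerSolution M γ l) 0 ξ :=
  (hasDerivAt_const ξ 0).congr_of_eventuallyEq (eventually_of_mem (Ioi_mem_nhds hξ)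
    fun _ hζ => lowerSolution_eq_zero_of_le hM hγ (le_of_lt hζ))

end LowerSolution

section Subsolution

lemma rpow_one_add_le_exp {s θ l γ ξ : ℝ} (hs : 0 ≤ s) (hsl : s ≤ exp (l * ξ)) (hξ : ξ ≤ 0)
    (hθ : 0 ≤ θ) (hγθ : γ ≤ l * θ) : s ^ (1 + θ) ≤ exp ((l + γ) * ξ) :=
  calc s ^ (1 + θ) ≤ exp (l * ξ) ^ (1 + θ) := rpow_le_rpow hs hsl (by linarith)
    _ = exp (l * ξ * (1 + θ)) := (exp_mul _ _).symm
    _ ≤ exp ((l + γ) * ξ) := exp_le_exp.2 (by nlinarith)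

lemma sub_mul_exp_le_of_rpow_lowerBound {f : ℝ → ℝ} {a N θ K s l γ ξ : ℝ}
    (hH : ∀ s ∈ Icc (0 : ℝ) 1, a * s - N * s ^ (1 + θ) ≤ f s) (hs : s ∈ Icc (0 : ℝ) 1)
    (hsl : s ≤ exp (l * ξ)) (hξ : ξ ≤ 0) (hθ : 0 ≤ θ) (hγθ : γ ≤ l * θ) (hNK : N ≤ K)
    (hK : 0 ≤ K) : a * s - K * exp ((l + γ) * ξ) ≤ f s := by
  have hNs : N * s ^ (1 + θ) ≤ K * s ^ (1 + θ) :=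
    mul_le_mul_of_nonneg_right hNK (rpow_nonneg hs.1 _)
  have hKs : K * s ^ (1 + θ) ≤ K * exp ((l + γ) * ξ) :=
    mul_le_mul_of_nonneg_left (rpow_one_add_le_exp hs.1 hsl hξ hθ hγθ) hK
  linarith [hH s hs]

variable (α : ℝ) {f : ℝ → ℝ} {a N θ c l γ M ξ : ℝ}

lemma lowerSolution_subsolution_of_lt
    (hH : ∀ s ∈ Icc (0 : ℝ) 1, a * s - N * s ^ (1 + θ) ≤ f s) (hl : 0 ≤ l) (hγ : 0 < γ)
    (hθ : 0 ≤ θ) (hγθ : γ ≤ l * θ) (hM : 1 ≤ M) (hroot : c * l = gfun a α l)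
    (hG : 0 ≤ c * (l + γ) - gfun a α (l + γ)) (hNM : N ≤ M * (c * (l + γ) - gfun a α (l + γ)))
    (hξ : ξ < -log M / γ) :
    c * deriv (lowerSolution M γ l) ξ
      ≤ (1 / 6) * Dh α (lowerSolution M γ l) ξ + f (lowerSolution M γ l ξ) := by
  have hM0 : 0 < M := by linarith
  have hUξ := lowerSolution_eq_of_lt (l := l) hM0 hγ hξ
  have hψU : ∀ ζ, exp (l * ζ) - M * exp ((l + γ) * ζ) ≤ lowerSolution M γ l ζ := fun ζ => by
    rw [lowerSolution, one_sub_mul_exp_mul_exp]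
    exact le_max_right _ _
  have hDh := Dh_le_Dh_of_le_of_eq α hψU hUξ.symm
  have hf := sub_mul_exp_le_of_rpow_lowerBound hH ⟨lowerSolution_nonneg, lowerSolution_le_one hM hγ hl⟩
    (lowerSolution_le_exp hM0.le) (hξ.le.trans (threshold_nonpos hM hγ)) hθ hγθ hNM
    (mul_nonneg hM0.le hG)
  rw [(hasDerivAt_lowerSolution_of_lt hM0 hγ hξ).deriv]
  linear_combination exp (l * ξ) * hroot + (1 / 6) * hDh + hf
    - (1 / 6) * Dh_sub_const_mul α (fun ζ => exp (l * ζ)) (fun ζ => exp ((l + γ) * ζ)) M ξ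
    - Dh_exp_mul α a l ξ + M * Dh_exp_mul α a (l + γ) ξ - a * hUξ

lemma lowerSolution_subsolution_of_gt (hf0 : f 0 = 0) (hM : 0 < M) (hγ : 0 < γ)
    (hξ : -log M / γ < ξ) :
    c * deriv (lowerSolution M γ l) ξ
      ≤ (1 / 6) * Dh α (lowerSolution M γ l) ξ + f (lowerSolution M γ l ξ) := by
  have hU0 := lowerSolution_eq_zero_of_le (l := l) hM hγ hξ.le
  rw [(hasDerivAt_lowerSolution_of_gt hM hγ hξ).deriv, hU0, hf0, mul_zero, add_zero]
  exact mul_nonneg (by norm_num)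
    (Dh_nonneg_of_nonneg_of_eq_zero α (fun _ => lowerSolution_nonneg) hU0)

end Subsolution

theorem stmt3_general (α : ℝ) (f f' : ℝ → ℝ) (hf : FisherKPP f f')
    (N θ : ℝ)
    (hH : ∀ s ∈ Set.Icc (0:ℝ) 1, f' 0 * s - N * s ^ (1 + θ) ≤ f s)
    (c l1 l2 : ℝ)
    (hl1pos : 0 < l1)
    (hroot1 : c * l1 = gfun (f' 0) α l1) (hroot2 : c * l2 = gfun (f' 0) α l2)
    (γ : ℝ) (hγ0 : 0 < γ) (hγ : γ < min (l1 * θ) (l2 - l1))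
    (M : ℝ) (hM : max 1 (N / (c * (l1 + γ) - gfun (f' 0) α (l1 + γ))) ≤ M) :
    (∀ ξ : ℝ, 0 ≤ max 0 ((1 - M * Real.exp (γ * ξ)) * Real.exp (l1 * ξ)) ∧
      max 0 ((1 - M * Real.exp (γ * ξ)) * Real.exp (l1 * ξ)) ≤ min 1 (Real.exp (l1 * ξ))) ∧
    (∀ ξ : ℝ, ξ ≠ -(Real.log M) / γ →
      c * deriv (fun ζ : ℝ => max 0 ((1 - M * Real.exp (γ * ζ)) * Real.exp (l1 * ζ))) ξ
        ≤ (1/6) * Dh α (fun ζ : ℝ => max 0 ((1 - M * Real.exp (γ * ζ)) * Real.exp (l1 * ζ))) ξ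
          + f (max 0 ((1 - M * Real.exp (γ * ξ)) * Real.exp (l1 * ξ)))) := by
  obtain ⟨hγθ, hγgap⟩ := lt_min_iff.1 hγ
  have hθ : 0 ≤ θ := (pos_of_mul_pos_right (hγ0.trans hγθ) hl1pos.le).le
  have hM1 : 1 ≤ M := (le_max_left _ _).trans hM
  have hG : 0 < c * (l1 + γ) - gfun (f' 0) α (l1 + γ) := sub_pos.2 <|
    (gfun_strictConvexOn _ α).lt_of_mem_Ioo_of_eq_mul hroot1.symm hroot2.symm
      ⟨by linarith, by linarith⟩
  have hNM : N ≤ M * (c * (l1 + γ) - gfun (f' 0) α (l1 + γ)) :=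
    (div_le_iff₀ hG).1 ((le_max_right _ _).trans hM)
  refine ⟨fun ξ => ⟨lowerSolution_nonneg, le_min (lowerSolution_le_one hM1 hγ0 hl1pos.le)
    (lowerSolution_le_exp (by linarith))⟩, fun ξ hξ => ?_⟩
  change c * deriv (lowerSolution M γ l1) ξ
    ≤ (1 / 6) * Dh α (lowerSolution M γ l1) ξ + f (lowerSolution M γ l1 ξ)
  rcases hξ.lt_or_gt with hξ | hξ
  · exact lowerSolution_subsolution_of_lt α hH hl1pos.le hγ0 hθ hγθ.le hM1 hroot1 hG.le hNM hξ
  · exact lowerSolution_subsolution_of_gt α hf.2.2.1 (by linarith) hγ0 hξ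

theorem stmt3 (α : ℝ) (f f' : ℝ → ℝ) (hf : FisherKPP f f')
    (N θ : ℝ) (hN : 0 ≤ N) (hθ : θ ∈ Set.Ioc (0:ℝ) 1)
    (hH : ∀ s ∈ Set.Icc (0:ℝ) 1, f' 0 * s - N * s ^ (1 + θ) ≤ f s)
    (c l1 l2 : ℝ) (hc : cstar (f' 0) α < c)
    (hl1pos : 0 < l1) (hl12 : l1 < l2)
    (hroot1 : c * l1 = gfun (f' 0) α l1) (hroot2 : c * l2 = gfun (f' 0) α l2)
    (γ : ℝ) (hγ0 : 0 < γ) (hγ : γ < min (l1 * θ) (l2 - l1))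
    (M : ℝ) (hM : max 1 (N / (c * (l1 + γ) - gfun (f' 0) α (l1 + γ))) ≤ M) :
    (∀ ξ : ℝ, 0 ≤ max 0 ((1 - M * Real.exp (γ * ξ)) * Real.exp (l1 * ξ)) ∧
      max 0 ((1 - M * Real.exp (γ * ξ)) * Real.exp (l1 * ξ)) ≤ min 1 (Real.exp (l1 * ξ))) ∧
    (∀ ξ : ℝ, ξ ≠ -(Real.log M) / γ →
      c * deriv (fun ζ : ℝ => max 0 ((1 - M * Real.exp (γ * ζ)) * Real.exp (l1 * ζ))) ξ
        ≤ (1/6) * Dh α (fun ζ : ℝ => max 0 ((1 - M * Real.exp (γ * ζ)) * Real.exp (l1 * ζ))) ξ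
          + f (max 0 ((1 - M * Real.exp (γ * ξ)) * Real.exp (l1 * ξ)))) :=
  stmt3_general α f f' hf N θ hH c l1 l2 hl1pos hroot1 hroot2 γ hγ0 hγ M hM
end

section
/- Let U be a traveling wave with speed c, with c > 0. Then the function ξ ↦ U(ξ)·exp(ξ/c) is nondecreasing on ℝ; equivalently, U(ξ − δ) ≤ exp(δ/c)·U(ξ) for all ξ ∈ ℝ and all δ ≥ 0. -/
open Real Set Filter

/-
Adding `U ξ` to both sides of the wave equation cancels the `-6 U ξ` term of the diffusion
operator, leaving `c U' + U = (1/6) Σ U(ξ ± δ_m) + f(U)`, which is nonnegative because `U ≥ 0`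
and `f ≥ 0` on `[0,1]`. Since `(U e^{ξ/c})' = (c U' + U) e^{ξ/c} / c`, the product is
nondecreasing; comparing it at `ξ - δ` and `ξ` gives the shift inequality.
-/

theorem FisherKPP.nonneg {f f' : ℝ → ℝ} (hf : FisherKPP f f') {s : ℝ} (hs : s ∈ Icc (0 : ℝ) 1) :
    0 ≤ f s := by
  obtain ⟨-, -, hf0, hf1, -, hpos⟩ := hf
  rcases hs.1.eq_or_lt with rfl | h0
  · exact hf0.ge
  rcases hs.2.eq_or_lt with rfl | h1
  · exact hf1.ge
  exact (hpos s ⟨h0, h1⟩).1.le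

theorem Dh_add_six_mul_nonneg (α : ℝ) {U : ℝ → ℝ} (hU : ∀ x, 0 ≤ U x) (ξ : ℝ) :
    0 ≤ Dh α U ξ + 6 * U ξ := by
  have := hU (ξ + delta1 α); have := hU (ξ - delta1 α)
  have := hU (ξ + delta2 α); have := hU (ξ - delta2 α)
  have := hU (ξ + delta3 α); have := hU (ξ - delta3 α)
  simp only [Dh]
  linarith

theorem IsTravelingWave.mul_deriv_add_nonneg {α c : ℝ} {f f' U : ℝ → ℝ} (hf : FisherKPP f f')
    (hU : IsTravelingWave α f c U) (ξ : ℝ) : 0 ≤ c * deriv U ξ + U ξ := by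
  obtain ⟨-, hrange, hwave, -, -⟩ := hU
  have hD := Dh_add_six_mul_nonneg α (fun x => (hrange x).1) ξ
  have hfU := hf.nonneg (hrange ξ)
  linarith [hwave ξ]

theorem monotone_mul_exp_div {u : ℝ → ℝ} {c : ℝ} (hc : 0 < c) (hu : Differentiable ℝ u)
    (h : ∀ x, 0 ≤ c * deriv u x + u x) : Monotone fun x => u x * exp (x / c) := by
  have hderiv : ∀ x, HasDerivAt (fun x => u x * exp (x / c))
      ((c * deriv u x + u x) / c * exp (x / c)) x := by
    intro x
    have hexp : HasDerivAt (fun x => exp (x / c)) (exp (x / c) * (1 / c)) x :=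
      ((hasDerivAt_id x).div_const c).exp
    refine ((hu x).hasDerivAt.mul hexp).congr_deriv ?_
    field_simp
  exact monotone_of_hasDerivAt_nonneg hderiv
    fun x => mul_nonneg (div_nonneg (h x) hc.le) (exp_pos _).le

theorem le_exp_mul_of_monotone_mul_exp {u : ℝ → ℝ} {c : ℝ}
    (hmono : Monotone fun x => u x * exp (x / c)) {x δ : ℝ} (hδ : 0 ≤ δ) :
    u (x - δ) ≤ exp (δ / c) * u x := by
  have h : u (x - δ) * exp ((x - δ) / c) ≤ u x * exp (x / c) := hmono (sub_le_self x hδ)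
  have hsplit : exp (x / c) = exp (δ / c) * exp ((x - δ) / c) := by
    rw [← exp_add]
    ring_nf
  rw [hsplit, ← mul_assoc, mul_comm (u x)] at h
  exact le_of_mul_le_mul_right h (exp_pos _)

theorem stmt13 (α : ℝ) (f f' : ℝ → ℝ) (hf : FisherKPP f f')
    (c : ℝ) (U : ℝ → ℝ) (hU : IsTravelingWave α f c U) (hc : 0 < c) :
    Monotone (fun ξ : ℝ => U ξ * Real.exp (ξ / c)) ∧
    (∀ ξ : ℝ, ∀ δ : ℝ, 0 ≤ δ → U (ξ - δ) ≤ Real.exp (δ / c) * U ξ) := by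
  have hmono : Monotone (fun ξ : ℝ => U ξ * exp (ξ / c)) :=
    monotone_mul_exp_div hc (hU.1.differentiable one_ne_zero) (hU.mul_deriv_add_nonneg hf)
  exact ⟨hmono, fun ξ δ hδ => le_exp_mul_of_monotone_mul_exp hmono hδ⟩
end
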